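/- The Killing-type form (A,B) := (2/n)·trace(AB) − (2/n²)·trace(A)·trace(B) on n×n matrices is invariant under the equivalence ∼: if A₁ ∈ M_{r×r}, B₁ ∈ M_{s×s}, and A = A₁ ⊗ I_p, B = B₁ ⊗ I_q with pr = qs = n, then (A,B) computed on M_{n×n} equals (2/t)·trace(A₁ ⋉ B₁) − (2/(rs))·trace(A₁)trace(B₁) with t = lcm(r,s). -/

import Mathlib

open Matrix

/-- Kronecker product of real matrices, reindexed to `Fin`-indexed matrices. -/
noncomputable def kronF {m n p q : ℕ} (A : Matrix (Fin m) (Fin n) ℝ)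
    (B : Matrix (Fin p) (Fin q) ℝ) : Matrix (Fin (m * p)) (Fin (n * q)) ℝ :=
  Matrix.reindex finProdFinEquiv finProdFinEquiv (Matrix.kroneckerMap (· * ·) A B)


theorem lcm_div_eq (n p : ℕ) : n * (Nat.lcm n p / n) = p * (Nat.lcm n p / p) := by
  rw [Nat.mul_div_cancel' (Nat.dvd_lcm_left n p), Nat.mul_div_cancel' (Nat.dvd_lcm_right n p)]

/-- The left semi-tensor product `A ⋉ B := (A ⊗ I_{t/n})(B ⊗ I_{t/p})`, `t = lcm n p`. -/
noncomputable def stp {m n p q : ℕ} (A : Matrix (Fin m) (Fin n) ℝ)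
    (B : Matrix (Fin p) (Fin q) ℝ) :
    Matrix (Fin (m * (Nat.lcm n p / n))) (Fin (q * (Nat.lcm n p / p))) ℝ :=
  (kronF A (1 : Matrix (Fin (Nat.lcm n p / n)) (Fin (Nat.lcm n p / n)) ℝ)) *
    (Matrix.reindex (finCongr (lcm_div_eq n p).symm) (Equiv.refl _)
      (kronF B (1 : Matrix (Fin (Nat.lcm n p / p)) (Fin (Nat.lcm n p / p)) ℝ)))

/-- Square-shaped version of the STP of square matrices. -/
noncomputable def stpSq {r s : ℕ} (A : Matrix (Fin r) (Fin r) ℝ) (B : Matrix (Fin s) (Fin s) ℝ) :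
    Matrix (Fin (r * (Nat.lcm r s / r))) (Fin (r * (Nat.lcm r s / r))) ℝ :=
  Matrix.reindex (Equiv.refl _) (finCongr (lcm_div_eq r s).symm) (stp A B)

/-!
Put `t = lcm(r, s)` and `n = rp = sq`. Since `r ∣ n` and `s ∣ n`, also `t ∣ n`, so
`p = (t/r)·m` and `q = (t/s)·m` with `m = n/t`. As `I_p = I_{t/r} ⊗ I_m`, associativity of the
Kronecker product gives `A = (A₁ ⊗ I_{t/r}) ⊗ I_m` and `B = (B₁ ⊗ I_{t/s}) ⊗ I_m`, so by the
mixed-product rule `AB = (A₁ ⋉ B₁) ⊗ I_m` and `trace(AB) = m·trace(A₁ ⋉ B₁)`. Together with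
`trace A = p·trace A₁` and `trace B = q·trace B₁`, all factors of `m` cancel.
-/

open scoped Kronecker

lemma trace_reindex_self {R ι κ : Type*} [AddCommMonoid R] [Fintype ι] [Fintype κ] (e : ι ≃ κ)
    (M : Matrix ι ι R) : trace (reindex e e M) = trace M :=
  e.symm.sum_comp M.diag

lemma reindex_mul_reindex {R ι κ : Type*} [AddCommMonoid R] [Mul R] [Fintype ι] [Fintype κ]
    (e : ι ≃ κ) (M N : Matrix ι ι R) :
    reindex e e M * reindex e e N = reindex e e (M * N) := by
  simp only [reindex_apply, submatrix_mul_equiv]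

section Kronecker

variable {k l m n p q : ℕ}

lemma kronF_eq_reindex_kronecker (A : Matrix (Fin k) (Fin l) ℝ) (B : Matrix (Fin m) (Fin n) ℝ) :
    kronF A B = reindex finProdFinEquiv finProdFinEquiv (A ⊗ₖ B) :=
  rfl

@[simp]
lemma kronF_apply (A : Matrix (Fin k) (Fin l) ℝ) (B : Matrix (Fin m) (Fin n) ℝ) (i : Fin k)
    (j : Fin l) (i' : Fin m) (j' : Fin n) :
    kronF A B (finProdFinEquiv (i, i')) (finProdFinEquiv (j, j')) = A i j * B i' j' := by
  simp [kronF]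

lemma kronF_assoc (A : Matrix (Fin k) (Fin l) ℝ) (B : Matrix (Fin m) (Fin n) ℝ)
    (C : Matrix (Fin p) (Fin q) ℝ) :
    kronF (kronF A B) C = reindex (finCongr (mul_assoc k m p).symm)
      (finCongr (mul_assoc l n q).symm) (kronF A (kronF B C)) := by
  have cast_finProdFinEquiv_assoc : ∀ {a b c : ℕ} (x : Fin a) (y : Fin b) (z : Fin c),
      Fin.cast (mul_assoc a b c) (finProdFinEquiv (finProdFinEquiv (x, y), z))
        = finProdFinEquiv (x, finProdFinEquiv (y, z)) := by
    intro a b c x y z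
    ext
    simp only [finProdFinEquiv_apply_val, Fin.val_cast]
    ring
  ext i j
  obtain ⟨⟨i₁₂, i₃⟩, rfl⟩ := finProdFinEquiv.surjective i
  obtain ⟨⟨i₁, i₂⟩, rfl⟩ := finProdFinEquiv.surjective i₁₂
  obtain ⟨⟨j₁₂, j₃⟩, rfl⟩ := finProdFinEquiv.surjective j
  obtain ⟨⟨j₁, j₂⟩, rfl⟩ := finProdFinEquiv.surjective j₁₂
  simp [cast_finProdFinEquiv_assoc, mul_assoc]

lemma kronF_one_one :
    kronF (1 : Matrix (Fin m) (Fin m) ℝ) (1 : Matrix (Fin n) (Fin n) ℝ) = 1 := by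
  simp [kronF_eq_reindex_kronecker]

lemma kronF_mul_kronF (A : Matrix (Fin k) (Fin l) ℝ) (A' : Matrix (Fin l) (Fin m) ℝ)
    (B : Matrix (Fin n) (Fin p) ℝ) (B' : Matrix (Fin p) (Fin q) ℝ) :
    kronF A B * kronF A' B' = kronF (A * A') (B * B') := by
  simp [kronF_eq_reindex_kronecker, mul_kronecker_mul]

lemma trace_kronF (A : Matrix (Fin m) (Fin m) ℝ) (B : Matrix (Fin n) (Fin n) ℝ) :
    trace (kronF A B) = trace A * trace B := by
  rw [kronF_eq_reindex_kronecker, trace_reindex_self, trace_kronecker]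

lemma kronF_kronF_one (A : Matrix (Fin k) (Fin k) ℝ) :
    kronF (kronF A (1 : Matrix (Fin m) (Fin m) ℝ)) (1 : Matrix (Fin n) (Fin n) ℝ)
      = reindex (finCongr (mul_assoc k m n).symm) (finCongr (mul_assoc k m n).symm)
          (kronF A (1 : Matrix (Fin (m * n)) (Fin (m * n)) ℝ)) := by
  rw [kronF_assoc, kronF_one_one]

lemma reindex_finCongr_kronF_one (A : Matrix (Fin k) (Fin k) ℝ) (h : k = l) :
    reindex (finCongr (congrArg (· * m) h)) (finCongr (congrArg (· * m) h))
        (kronF A (1 : Matrix (Fin m) (Fin m) ℝ))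
      = kronF (reindex (finCongr h) (finCongr h) A) 1 := by
  subst h
  simp

end Kronecker

lemma trace_kronF_one_mul_reindex_kronF_one {r s a b : ℕ} (A : Matrix (Fin r) (Fin r) ℝ)
    (B : Matrix (Fin s) (Fin s) ℝ) (hab : r * a = s * b) (m : ℕ)
    (h : r * (a * m) = s * (b * m)) :
    trace (kronF A (1 : Matrix (Fin (a * m)) (Fin (a * m)) ℝ) *
        reindex (finCongr h.symm) (finCongr h.symm)
          (kronF B (1 : Matrix (Fin (b * m)) (Fin (b * m)) ℝ)))
      = m * trace (kronF A (1 : Matrix (Fin a) (Fin a) ℝ) *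
        reindex (finCongr hab.symm) (finCongr hab.symm)
          (kronF B (1 : Matrix (Fin b) (Fin b) ℝ))) := by
  set e := finCongr (mul_assoc r a m)
  have hA : kronF A (1 : Matrix (Fin (a * m)) (Fin (a * m)) ℝ)
      = reindex e e (kronF (kronF A (1 : Matrix (Fin a) (Fin a) ℝ)) 1) := by
    rw [kronF_kronF_one]
    ext i j
    simp [e]
  have hB : reindex (finCongr h.symm) (finCongr h.symm)
        (kronF B (1 : Matrix (Fin (b * m)) (Fin (b * m)) ℝ))
      = reindex e e (kronF (reindex (finCongr hab.symm) (finCongr hab.symm)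
          (kronF B (1 : Matrix (Fin b) (Fin b) ℝ))) 1) := by
    rw [← reindex_finCongr_kronF_one, kronF_kronF_one]
    ext i j
    simp [e]
  rw [hA, hB, reindex_mul_reindex, trace_reindex_self, kronF_mul_kronF, one_mul, trace_kronF,
    trace_one, Fintype.card_fin, mul_comm]

lemma stpSq_eq_mul {r s : ℕ} (A : Matrix (Fin r) (Fin r) ℝ) (B : Matrix (Fin s) (Fin s) ℝ) :
    stpSq A B = kronF A (1 : Matrix (Fin (Nat.lcm r s / r)) (Fin (Nat.lcm r s / r)) ℝ) *
      reindex (finCongr (lcm_div_eq r s).symm) (finCongr (lcm_div_eq r s).symm)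
        (kronF B (1 : Matrix (Fin (Nat.lcm r s / s)) (Fin (Nat.lcm r s / s)) ℝ)) :=
  rfl

lemma exists_eq_lcm_div_mul {r s p q : ℕ} (hr : 0 < r) (hs : 0 < s) (h : r * p = s * q) :
    ∃ m, p = Nat.lcm r s / r * m ∧ q = Nat.lcm r s / s * m := by
  obtain ⟨m, hm⟩ : Nat.lcm r s ∣ r * p :=
    Nat.lcm_dvd (dvd_mul_right r p) (h ▸ dvd_mul_right s q)
  refine ⟨m, Nat.eq_of_mul_eq_mul_left hr ?_, Nat.eq_of_mul_eq_mul_left hs ?_⟩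
  · rw [hm, ← mul_assoc, Nat.mul_div_cancel' (Nat.dvd_lcm_left r s)]
  · rw [← h, hm, ← mul_assoc, Nat.mul_div_cancel' (Nat.dvd_lcm_right r s)]

theorem killing_form_invariant_general {r s p q : ℕ} (hp : 0 < p)
    (A₁ : Matrix (Fin r) (Fin r) ℝ) (B₁ : Matrix (Fin s) (Fin s) ℝ)
    (h : r * p = s * q) :
    2 / ((r * p : ℕ) : ℝ) * Matrix.trace (kronF A₁ (1 : Matrix (Fin p) (Fin p) ℝ) *
          Matrix.reindex (finCongr h.symm) (finCongr h.symm)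
            (kronF B₁ (1 : Matrix (Fin q) (Fin q) ℝ))) -
        2 / ((r * p : ℕ) : ℝ) ^ 2 *
          (Matrix.trace (kronF A₁ (1 : Matrix (Fin p) (Fin p) ℝ)) *
            Matrix.trace (kronF B₁ (1 : Matrix (Fin q) (Fin q) ℝ))) =
      2 / (Nat.lcm r s : ℝ) * Matrix.trace (stpSq A₁ B₁) -
        2 / ((r : ℝ) * s) * (Matrix.trace A₁ * Matrix.trace B₁) := by
  rcases Nat.eq_zero_or_pos r with rfl | hr
  · simp -- every coefficient is of the form `2 / 0 = 0`
  have hs : 0 < s := Nat.pos_of_mul_pos_right (h ▸ Nat.mul_pos hr hp)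
  obtain ⟨m, rfl, rfl⟩ := exists_eq_lcm_div_mul hr hs h
  rw [trace_kronF_one_mul_reindex_kronF_one A₁ B₁ (lcm_div_eq r s) m h, ← stpSq_eq_mul,
    trace_kronF, trace_kronF, trace_one, trace_one, Fintype.card_fin, Fintype.card_fin]
  have hra : (r : ℝ) * (Nat.lcm r s / r : ℕ) = Nat.lcm r s := by
    exact_mod_cast Nat.mul_div_cancel' (Nat.dvd_lcm_left r s)
  have hsb : (s : ℝ) * (Nat.lcm r s / s : ℕ) = Nat.lcm r s := by
    exact_mod_cast Nat.mul_div_cancel' (Nat.dvd_lcm_right r s)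
  have ha : Nat.lcm r s / r ≠ 0 := (Nat.pos_of_mul_pos_right hp).ne'
  have hm : m ≠ 0 := (Nat.pos_of_mul_pos_left hp).ne'
  push_cast
  field_simp
  linear_combination (A₁.trace * B₁.trace * Nat.lcm r s - r * (stpSq A₁ B₁).trace * s) * hra
    - A₁.trace * B₁.trace * Nat.lcm r s * hsb

/-- The Killing-type form is invariant under `∼`: if `A = A₁ ⊗ I_p`, `B = B₁ ⊗ I_q`
with `rp = sq = n`, then `(A,B)` on `M_{n×n}` equals
`(2/t) trace(A₁ ⋉ B₁) − (2/(rs)) trace(A₁) trace(B₁)`, `t = lcm(r,s)`. -/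
theorem killing_form_invariant {r s p q : ℕ} (hp : 0 < p) (hq : 0 < q)
    (A₁ : Matrix (Fin r) (Fin r) ℝ) (B₁ : Matrix (Fin s) (Fin s) ℝ)
    (h : r * p = s * q) :
    2 / ((r * p : ℕ) : ℝ) * Matrix.trace (kronF A₁ (1 : Matrix (Fin p) (Fin p) ℝ) *
          Matrix.reindex (finCongr h.symm) (finCongr h.symm)
            (kronF B₁ (1 : Matrix (Fin q) (Fin q) ℝ))) -
        2 / ((r * p : ℕ) : ℝ) ^ 2 *
          (Matrix.trace (kronF A₁ (1 : Matrix (Fin p) (Fin p) ℝ)) *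
            Matrix.trace (kronF B₁ (1 : Matrix (Fin q) (Fin q) ℝ))) =
      2 / (Nat.lcm r s : ℝ) * Matrix.trace (stpSq A₁ B₁) -
        2 / ((r : ℝ) * s) * (Matrix.trace A₁ * Matrix.trace B₁) :=
  killing_form_invariant_general hp A₁ B₁ h
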